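/- arXiv:1202.5151 — 2 statements merged into one kernel-verified Lean document; each statement's English description precedes it below -/
import Mathlib

section
/- Suppose the augmented model Y = Σ_{r=1}^k α_r ξ_r + Σ_{j=1}^p β_j X_j + ε holds, where ξ_r = ψ_rᵀW/√(pλ_r) are standardized uncorrelated factors with Var(ξ_r) = 1, X = W + Z with W and Z uncorrelated, Z has uncorrelated coordinates with variances σ_j² ≥ D₁ > 0, and ψ_r are orthonormal eigenvectors of Γ = E(WWᵀ) with E((ψ_rᵀW)²) = pλ_r. Then for any alternative coefficients α* ∈ ℝ^k and β* ∈ ℝ^p, E([Σ_r (α_r − α*_r) ξ_r + Σ_j (β_j − β*_j) X_j]²) ≥ Σ_{r=1}^k (α_r − α*_r + √(pλ_r) ψ_rᵀ(β − β*))² + D₁ ‖β − β*‖₂². In particular, the coefficients (α, β) of the augmented model are unique. -/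
/-!
Put `a = α - α*`, `b = β - β*` and `P_r = ψ_rᵀW`. Since the rows of `ψ` are orthonormal,
`bᵀW = Σ_r (ψb)_r P_r`, so the error is `Σ_r d_r P_r + bᵀZ` with `d = ψb + (a_r/√(pλ_r))_{r<k}`.
The family `(P_r)_r, (Z_j)_j` is pairwise uncorrelated, so the second moment is
`Σ_r d_r² pλ_r + Σ_j b_j² σ_j²`; keeping only `r < k` in the first sum and using `σ_j² ≥ D₁`
gives the bound, because `√(pλ_r) d_r = a_r + √(pλ_r) ψ_rᵀb` there.
-/

open MeasureTheory Matrix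

theorem Fintype.sum_comp_le_sum_of_injective {ι κ M : Type*} [Fintype ι] [Fintype κ]
    [AddCommMonoid M] [PartialOrder M] [IsOrderedAddMonoid M] {e : ι → κ}
    (he : Function.Injective e) {f : κ → M} (hf : ∀ j, 0 ≤ f j) :
    ∑ i, f (e i) ≤ ∑ j, f j := by
  classical
  rw [← Finset.sum_image he.injOn]
  exact Finset.sum_le_univ_sum_of_nonneg hf

theorem Fintype.sum_extend_zero_mul {ι κ R : Type*} [Fintype ι] [Fintype κ] [Semiring R]
    {e : ι → κ} (he : Function.Injective e) (g : ι → R) (x : κ → R) :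
    ∑ j, Function.extend e g 0 j * x j = ∑ i, g i * x (e i) :=
  (Fintype.sum_of_injective e he _ _
    (fun j hj => by rw [Function.extend_apply' _ _ _ hj, Pi.zero_apply, zero_mul])
    (fun i => by rw [he.extend_apply])).symm

namespace Matrix

variable {n R : Type*} [Fintype n] [DecidableEq n] [CommRing R]

theorem mulVec_dotProduct_mulVec_of_mul_transpose_eq_one {ψ : Matrix n n R}
    (hψ : ψ * ψᵀ = 1) (v w : n → R) : ψ *ᵥ v ⬝ᵥ ψ *ᵥ w = v ⬝ᵥ w := by
  rw [← vecMul_transpose, ← dotProduct_mulVec, mulVec_mulVec, mul_eq_one_comm.mp hψ,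
    one_mulVec]

end Matrix

theorem sum_mul_div_add_dotProduct_eq {ι κ R : Type*} [Fintype ι] [Fintype κ] [DecidableEq κ]
    [Field R] {ψ : Matrix κ κ R} (hψ : ψ * ψᵀ = 1) {e : ι → κ} (he : Function.Injective e)
    (a q : ι → R) (b w : κ → R) :
    ∑ i, a i * ((ψ *ᵥ w) (e i) / q i) + b ⬝ᵥ w
      = (ψ *ᵥ b + Function.extend e (a / q) 0) ⬝ᵥ ψ *ᵥ w := by
  rw [add_dotProduct, mulVec_dotProduct_mulVec_of_mul_transpose_eq_one hψ, add_comm]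
  congr 1
  rw [dotProduct, Fintype.sum_extend_zero_mul he]
  exact Finset.sum_congr rfl fun i _ => by rw [Pi.div_apply]; ring

section SecondMoment

variable {Ω : Type*} [MeasurableSpace Ω] {μ : Measure Ω}

theorem integral_sum_mul_eq_zero {ι : Type*} [Fintype ι] {X : ι → Ω → ℝ} {Y : Ω → ℝ}
    (hX : ∀ i, MemLp (X i) 2 μ) (hY : MemLp Y 2 μ) (h : ∀ i, ∫ ω, X i ω * Y ω ∂μ = 0)
    (c : ι → ℝ) : ∫ ω, (∑ i, c i * X i ω) * Y ω ∂μ = 0 := by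
  have hint : ∀ i, Integrable (fun ω => c i * (X i ω * Y ω)) μ := fun i =>
    ((hX i).integrable_mul hY).const_mul (c i)
  simp_rw [Finset.sum_mul, mul_assoc]
  rw [integral_finsetSum _ fun i _ => hint i]
  simp [integral_const_mul, h]

theorem integral_sq_sum_mul_of_uncorrelated {ι : Type*} [Fintype ι] {X : ι → Ω → ℝ}
    (hX : ∀ i, MemLp (X i) 2 μ) (hunc : Pairwise fun i j => ∫ ω, X i ω * X j ω ∂μ = 0)
    (c : ι → ℝ) :
    ∫ ω, (∑ i, c i * X i ω) ^ 2 ∂μ = ∑ i, c i ^ 2 * ∫ ω, X i ω ^ 2 ∂μ := by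
  have hprod : ∀ i j, ∫ ω, c i * X i ω * (c j * X j ω) ∂μ
      = c i * c j * ∫ ω, X i ω * X j ω ∂μ := fun i j => by
    rw [← integral_const_mul]
    congr 1 with ω
    ring
  have hint : ∀ i j, Integrable (fun ω => c i * X i ω * (c j * X j ω)) μ := fun i j =>
    ((hX i).const_mul (c i)).integrable_mul ((hX j).const_mul (c j))
  calc ∫ ω, (∑ i, c i * X i ω) ^ 2 ∂μ
      = ∑ i, ∑ j, ∫ ω, c i * X i ω * (c j * X j ω) ∂μ := by
        simp_rw [sq, Finset.sum_mul_sum]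
        rw [integral_finsetSum _ fun i _ => integrable_finsetSum _ fun j _ => hint i j]
        exact Finset.sum_congr rfl fun i _ => integral_finsetSum _ fun j _ => hint i j
    _ = ∑ i, c i * c i * ∫ ω, X i ω * X i ω ∂μ := by
        refine Finset.sum_congr rfl fun i _ => ?_
        rw [Finset.sum_eq_single i (fun j _ hji => by rw [hprod, hunc hji.symm, mul_zero])
          (by simp), hprod]
    _ = ∑ i, c i ^ 2 * ∫ ω, X i ω ^ 2 ∂μ := by simp_rw [sq]

theorem integral_sq_sum_mul_add_sum_mul_of_uncorrelated {ι κ : Type*} [Fintype ι] [Fintype κ]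
    {X : ι → Ω → ℝ} {Y : κ → Ω → ℝ}
    (hX : ∀ i, MemLp (X i) 2 μ) (hY : ∀ j, MemLp (Y j) 2 μ)
    (hXX : Pairwise fun i i' => ∫ ω, X i ω * X i' ω ∂μ = 0)
    (hYY : Pairwise fun j j' => ∫ ω, Y j ω * Y j' ω ∂μ = 0)
    (hXY : ∀ i j, ∫ ω, X i ω * Y j ω ∂μ = 0) (c : ι → ℝ) (d : κ → ℝ) :
    ∫ ω, (∑ i, c i * X i ω + ∑ j, d j * Y j ω) ^ 2 ∂μ
      = ∑ i, c i ^ 2 * ∫ ω, X i ω ^ 2 ∂μ + ∑ j, d j ^ 2 * ∫ ω, Y j ω ^ 2 ∂μ := by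
  have hunc : Pairwise fun u u' =>
      ∫ ω, Sum.elim X Y u ω * Sum.elim X Y u' ω ∂μ = 0 := by
    rintro (i | j) (i' | j') hne
    · exact hXX (ne_of_apply_ne Sum.inl hne)
    · exact hXY i j'
    · simpa only [Sum.elim_inl, Sum.elim_inr, mul_comm] using hXY i' j
    · exact hYY (ne_of_apply_ne Sum.inr hne)
  simpa only [Fintype.sum_sum_type, Sum.elim_inl, Sum.elim_inr] using
    integral_sq_sum_mul_of_uncorrelated (Sum.rec hX hY) hunc (Sum.elim c d)

theorem sum_sq_add_mul_sum_sq_le_integral_sq {ι κ : Type*} [Fintype ι] [Fintype κ]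
    [DecidableEq κ] {W Z : κ → Ω → ℝ}
    {ψ : κ → κ → ℝ} {v : κ → ℝ} {e : ι → κ} {D : ℝ} (he : Function.Injective e)
    (hW2 : ∀ j, MemLp (W j) 2 μ) (hZ2 : ∀ j, MemLp (Z j) 2 μ)
    (horth : ∀ r s, ∑ j, ψ r j * ψ s j = if r = s then (1 : ℝ) else 0)
    (hv : ∀ i, 0 < v (e i))
    (hWcov : ∀ r s, ∫ ω, (∑ j, ψ r j * W j ω) * (∑ j, ψ s j * W j ω) ∂μ
      = if r = s then v r else 0)
    (hWZ : ∀ j l, ∫ ω, W j ω * Z l ω ∂μ = 0)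
    (hZZ : ∀ j l, j ≠ l → ∫ ω, Z j ω * Z l ω ∂μ = 0)
    (hZvar : ∀ j, D ≤ ∫ ω, Z j ω ^ 2 ∂μ) (a : ι → ℝ) (b : κ → ℝ) :
    ∑ i, (a i + √(v (e i)) * ∑ j, ψ (e i) j * b j) ^ 2 + D * ∑ j, b j ^ 2
      ≤ ∫ ω, (∑ i, a i * ((∑ j, ψ (e i) j * W j ω) / √(v (e i)))
          + ∑ j, b j * (W j ω + Z j ω)) ^ 2 ∂μ := by
  have hψ : of ψ * (of ψ)ᵀ = 1 := by
    ext r s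
    simpa [mul_apply, one_apply] using horth r s
  set P : κ → Ω → ℝ := fun r ω => ∑ j, ψ r j * W j ω
  set d : κ → ℝ := of ψ *ᵥ b + Function.extend e (a / fun i => √(v (e i))) 0
  have hP2 : ∀ r, MemLp (P r) 2 μ := fun r =>
    memLp_finsetSum _ fun j _ => (hW2 j).const_mul _
  have hPP : Pairwise fun r s => ∫ ω, P r ω * P s ω ∂μ = 0 := fun r s hrs => by
    simpa [hrs] using hWcov r s
  have hPZ : ∀ r j, ∫ ω, P r ω * Z j ω ∂μ = 0 := fun r j =>
    integral_sum_mul_eq_zero hW2 (hZ2 j) (fun l => hWZ l j) (ψ r)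
  have hdecomp : ∀ ω, ∑ i, a i * ((∑ j, ψ (e i) j * W j ω) / √(v (e i)))
      + ∑ j, b j * (W j ω + Z j ω)
      = ∑ s, d s * P s ω + ∑ j, b j * Z j ω := fun ω => by
    simp only [mul_add, Finset.sum_add_distrib, ← add_assoc]
    exact congrArg (· + _) (sum_mul_div_add_dotProduct_eq hψ he a _ b (fun j => W j ω))
  have hterm : ∀ i, (a i + √(v (e i)) * ∑ j, ψ (e i) j * b j) ^ 2
      = d (e i) ^ 2 * ∫ ω, P (e i) ω ^ 2 ∂μ := fun i => by
    have hPvar : ∫ ω, P (e i) ω ^ 2 ∂μ = √(v (e i)) ^ 2 := by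
      simp_rw [sq (P _ _)]
      rw [hWcov, if_pos rfl, Real.sq_sqrt (hv i).le]
    have hsqrt : √(v (e i)) ≠ 0 := (Real.sqrt_pos.mpr (hv i)).ne'
    rw [hPvar, ← mul_pow]
    simp only [d, Pi.add_apply, he.extend_apply, Pi.div_apply]
    rw [add_mul, div_mul_cancel₀ _ hsqrt, add_comm (a i), mul_comm (√ _)]
    rfl
  calc _ ≤ ∑ s, d s ^ 2 * ∫ ω, P s ω ^ 2 ∂μ + ∑ j, b j ^ 2 * ∫ ω, Z j ω ^ 2 ∂μ := by
        gcongr ?_ + ?_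
        · simp_rw [hterm]
          exact Fintype.sum_comp_le_sum_of_injective he
            (f := fun s => d s ^ 2 * ∫ ω, P s ω ^ 2 ∂μ) fun s => by positivity
        · rw [Finset.mul_sum]
          exact Finset.sum_le_sum fun j _ => by
            rw [mul_comm]; exact mul_le_mul_of_nonneg_left (hZvar j) (sq_nonneg _)
    _ = ∫ ω, (∑ s, d s * P s ω + ∑ j, b j * Z j ω) ^ 2 ∂μ :=
        (integral_sq_sum_mul_add_sum_mul_of_uncorrelated hP2 hZ2 hPP
          (fun j l => hZZ j l) hPZ d b).symm
    _ = _ := by simp_rw [hdecomp]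

end SecondMoment

theorem eq_of_sum_sq_sub_nonpos {ι : Type*} [Fintype ι] {x y : ι → ℝ}
    (h : ∑ i, (x i - y i) ^ 2 ≤ 0) : x = y := by
  have hzero := (Fintype.sum_eq_zero_iff_of_nonneg fun i => sq_nonneg (x i - y i)).mp
    (le_antisymm h (Finset.sum_nonneg fun i _ => sq_nonneg _))
  funext i
  exact sub_eq_zero.mp (pow_eq_zero_iff two_ne_zero |>.mp (congrFun hzero i))

theorem augmented_model_identifiability_general {Ω : Type*} [MeasurableSpace Ω]
    (μ : Measure Ω)
    {k p : ℕ} (hkp : k ≤ p)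
    (W Z : Fin p → Ω → ℝ)
    (hW2 : ∀ j, MemLp (W j) 2 μ) (hZ2 : ∀ j, MemLp (Z j) 2 μ)
    (ψ : Fin p → Fin p → ℝ)
    (horth : ∀ r s, ∑ j, ψ r j * ψ s j = if r = s then (1 : ℝ) else 0)
    (lam : Fin p → ℝ)
    (hlampos : ∀ r : Fin p, (r : ℕ) < k → 0 < lam r)
    (hWcov : ∀ r s, ∫ ω, (∑ j, ψ r j * W j ω) * (∑ j, ψ s j * W j ω) ∂μ
      = if r = s then (p : ℝ) * lam r else 0)
    (hWZ : ∀ j l, ∫ ω, W j ω * Z l ω ∂μ = 0)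
    (hZZ : ∀ j l, j ≠ l → ∫ ω, Z j ω * Z l ω ∂μ = 0)
    (D₁ : ℝ) (hD₁ : 0 < D₁)
    (hZvar : ∀ j, D₁ ≤ ∫ ω, Z j ω ^ 2 ∂μ)
    (ξ : Fin k → Ω → ℝ)
    (hξ : ∀ r : Fin k, ξ r = fun ω =>
      (∑ j, ψ (Fin.castLE hkp r) j * W j ω) / Real.sqrt ((p : ℝ) * lam (Fin.castLE hkp r)))
    (α αs : Fin k → ℝ) (β βs : Fin p → ℝ) :
    (∑ r : Fin k, ((α r - αs r)
        + Real.sqrt ((p : ℝ) * lam (Fin.castLE hkp r))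
          * ∑ j, ψ (Fin.castLE hkp r) j * (β j - βs j)) ^ 2
      + D₁ * ∑ j, (β j - βs j) ^ 2
    ≤ ∫ ω, (∑ r, (α r - αs r) * ξ r ω
        + ∑ j, (β j - βs j) * (W j ω + Z j ω)) ^ 2 ∂μ) ∧
    ((∀ᵐ ω ∂μ, ∑ r, α r * ξ r ω + ∑ j, β j * (W j ω + Z j ω)
        = ∑ r, αs r * ξ r ω + ∑ j, βs j * (W j ω + Z j ω)) → α = αs ∧ β = βs) := by
  have hvar_pos : ∀ r : Fin k, 0 < (p : ℝ) * lam (Fin.castLE hkp r) := fun r =>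
    mul_pos (Nat.cast_pos.mpr (r.pos.trans_le hkp)) (hlampos _ r.isLt)
  have hbound := (sum_sq_add_mul_sum_sq_le_integral_sq (Fin.castLE_injective hkp) hW2 hZ2
    horth hvar_pos hWcov hWZ hZZ hZvar (fun r => α r - αs r) (fun j => β j - βs j)).trans_eq
    (by simp only [hξ] : _ = ∫ ω, (∑ r, (α r - αs r) * ξ r ω
        + ∑ j, (β j - βs j) * (W j ω + Z j ω)) ^ 2 ∂μ)
  refine ⟨hbound, fun hfit => ?_⟩
  have hzero : ∫ ω, (∑ r, (α r - αs r) * ξ r ω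
      + ∑ j, (β j - βs j) * (W j ω + Z j ω)) ^ 2 ∂μ = 0 :=
    integral_eq_zero_of_ae <| hfit.mono fun ω hω => by
      simp only [sub_mul, Finset.sum_sub_distrib, Pi.zero_apply, sub_add_sub_comm, hω,
        sub_self, sq, mul_zero]
  rw [hzero] at hbound
  have hβ : β = βs := eq_of_sum_sq_sub_nonpos <| nonpos_of_mul_nonpos_right
    (hbound.trans' (le_add_of_nonneg_left (Finset.sum_nonneg fun r _ => sq_nonneg _))) hD₁
  subst hβ
  simp only [sub_self, mul_zero, Finset.sum_const_zero, add_zero, zero_pow two_ne_zero]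
    at hbound
  exact ⟨eq_of_sum_sq_sub_nonpos hbound, rfl⟩

/-- Identifiability of the augmented model: for the model
`Y = Σ_r α_r ξ_r + Σ_j β_j X_j + ε` with `X = W + Z`, standardized factors
`ξ_r = ψ_rᵀW/√(pλ_r)`, and the stated uncorrelatedness assumptions, any alternative
coefficients `(α*, β*)` satisfy
`E([Σ_r (α_r−α*_r)ξ_r + Σ_j (β_j−β*_j)X_j]²)
  ≥ Σ_r (α_r−α*_r+√(pλ_r)ψ_rᵀ(β−β*))² + D₁‖β−β*‖₂²`;
in particular the coefficients of the augmented model are unique. -/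
theorem augmented_model_identifiability {Ω : Type*} [MeasurableSpace Ω]
    (μ : Measure Ω) [IsProbabilityMeasure μ]
    {k p : ℕ} (hkp : k ≤ p)
    (W Z : Fin p → Ω → ℝ)
    (hWm : ∀ j, Measurable (W j)) (hZm : ∀ j, Measurable (Z j))
    (hW2 : ∀ j, MemLp (W j) 2 μ) (hZ2 : ∀ j, MemLp (Z j) 2 μ)
    (ψ : Fin p → Fin p → ℝ)
    (horth : ∀ r s, ∑ j, ψ r j * ψ s j = if r = s then (1 : ℝ) else 0)
    (lam : Fin p → ℝ) (hlamnn : ∀ r, 0 ≤ lam r)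
    (hlampos : ∀ r : Fin p, (r : ℕ) < k → 0 < lam r)
    (hWcov : ∀ r s, ∫ ω, (∑ j, ψ r j * W j ω) * (∑ j, ψ s j * W j ω) ∂μ
      = if r = s then (p : ℝ) * lam r else 0)
    (hWZ : ∀ j l, ∫ ω, W j ω * Z l ω ∂μ = 0)
    (hZZ : ∀ j l, j ≠ l → ∫ ω, Z j ω * Z l ω ∂μ = 0)
    (D₁ : ℝ) (hD₁ : 0 < D₁)
    (hZvar : ∀ j, D₁ ≤ ∫ ω, Z j ω ^ 2 ∂μ)
    (ξ : Fin k → Ω → ℝ)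
    (hξ : ∀ r : Fin k, ξ r = fun ω =>
      (∑ j, ψ (Fin.castLE hkp r) j * W j ω) / Real.sqrt ((p : ℝ) * lam (Fin.castLE hkp r)))
    (α αs : Fin k → ℝ) (β βs : Fin p → ℝ) :
    (∑ r : Fin k, ((α r - αs r)
        + Real.sqrt ((p : ℝ) * lam (Fin.castLE hkp r))
          * ∑ j, ψ (Fin.castLE hkp r) j * (β j - βs j)) ^ 2
      + D₁ * ∑ j, (β j - βs j) ^ 2
    ≤ ∫ ω, (∑ r, (α r - αs r) * ξ r ω
        + ∑ j, (β j - βs j) * (W j ω + Z j ω)) ^ 2 ∂μ) ∧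
    ((∀ᵐ ω ∂μ, ∑ r, α r * ξ r ω + ∑ j, β j * (W j ω + Z j ω)
        = ∑ r, αs r * ξ r ω + ∑ j, βs j * (W j ω + Z j ω)) → α = αs ∧ β = βs) :=
  augmented_model_identifiability_general μ hkp W Z hW2 hZ2 ψ horth lam hlampos hWcov hWZ hZZ D₁ hD₁
    hZvar ξ hξ α αs β βs
end

section
/- Let A and B be symmetric p×p matrices, let λ₁(A) > λ₂(A) > ... be the eigenvalues of A with unit eigenvectors ψ_r(A), and let g_r = min_{j≠r} |λ_j(A) − λ_r(A)| > 0 be the eigengap at r. If ψ_r(A+B) denotes a suitably signed unit eigenvector of A+B for its r-th eigenvalue, then ‖ψ_r(A+B) − ψ_r(A)‖₂ ≤ ‖B‖/g_r + 6‖B‖²/g_r², where ‖B‖ is the spectral norm. -/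
/-!
Write `v = c • u + w` with `c = ⟪u, v⟫ ≥ 0` and `w ⟂ u`. By Weyl's inequality the `r`-th eigenvalue
`μ` of `A + B` lies within `‖B‖` of the eigenvalue `λ` of `A`, so every other eigenvalue of `A`
is at distance at least `g - ‖B‖` from `μ`; as `w` has no component along the simple eigenvector
`u`, this gives `(g - ‖B‖) ‖w‖ ≤ ‖(A - μ) w‖`. On the other hand `(A - μ) w` is the component of
`-B v` orthogonal to `u`, so `‖(A - μ) w‖ ≤ ‖B‖`. Finally `‖v - u‖² = 2 - 2c ≤ ‖w‖² + ‖w‖⁴`, and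
`‖w‖ ≤ ‖B‖ / (g - ‖B‖)` turns into the stated bound (which exceeds `2` when `g ≤ 2 ‖B‖`).
-/

/-- The `r`-th largest eigenvalue (counted with multiplicity) of a Hermitian real matrix. -/
noncomputable def sortedEig {p : ℕ} {A : Matrix (Fin p) (Fin p) ℝ} (hA : A.IsHermitian) :
    Fin p → ℝ :=
  fun i => hA.eigenvalues (Tuple.sort hA.eigenvalues (Fin.rev i))

open Finset Matrix Module Submodule
open scoped RealInnerProductSpace

namespace Tuple

variable {n : ℕ} {α : Type*} [LinearOrder α]

lemma succ_le_card_filter_le_apply_sort (f : Fin n → α) (k : Fin n) :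
    k.val + 1 ≤ #{i | f i ≤ f (sort f k)} := by
  rw [← Fin.card_Iic]
  refine card_le_card_of_injOn (sort f) (fun j hj => ?_) (sort f).injective.injOn
  simp only [coe_Iic, Set.mem_Iic, coe_filter, mem_univ, true_and, Set.mem_ofPred_eq] at hj ⊢
  exact monotone_sort f hj

lemma sub_le_card_filter_apply_sort_le (f : Fin n → α) (k : Fin n) :
    n - k.val ≤ #{i | f (sort f k) ≤ f i} := by
  rw [← Fin.card_Ici]
  refine card_le_card_of_injOn (sort f) (fun j hj => ?_) (sort f).injective.injOn
  simp only [coe_Ici, Set.mem_Ici, coe_filter, mem_univ, true_and, Set.mem_ofPred_eq] at hj ⊢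
  exact monotone_sort f hj

end Tuple

namespace OrthonormalBasis

variable {𝕜 E ι : Type*} [RCLike 𝕜] [NormedAddCommGroup E] [InnerProductSpace 𝕜 E] [Fintype ι]
  (b : OrthonormalBasis ι 𝕜 E)

lemma finrank_span_image (s : Finset ι) : finrank 𝕜 (span 𝕜 (b '' s)) = #s := by
  rw [Set.image_eq_range]
  exact (finrank_span_eq_card (b.orthonormal.linearIndependent.comp _ Subtype.val_injective)).trans
    (by simp)

lemma repr_eq_zero_of_mem_span_image {s : Set ι} {x : E} (hx : x ∈ span 𝕜 (b '' s)) {i : ι}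
    (hi : i ∉ s) : b.repr x i = 0 := by
  rw [← b.coe_toBasis, Module.Basis.mem_span_image] at hx
  rw [← b.coe_toBasis_repr_apply]
  by_contra h
  exact hi (hx (Finsupp.mem_support_iff.mpr h))

end OrthonormalBasis

lemma sum_mul_sq_le_sum_mul_sq {ι : Type*} (s : Finset ι) {a c x : ι → ℝ}
    (h : ∀ i, x i ≠ 0 → a i ≤ c i) : ∑ i ∈ s, a i * x i ^ 2 ≤ ∑ i ∈ s, c i * x i ^ 2 := by
  refine sum_le_sum fun i _ => ?_
  rcases eq_or_ne (x i) 0 with hi | hi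
  · simp [hi]
  · exact mul_le_mul_of_nonneg_right (h i hi) (sq_nonneg _)

namespace LinearMap.IsSymmetric

variable {E ι : Type*} [NormedAddCommGroup E] [InnerProductSpace ℝ E] [Fintype ι]
  {T : E →ₗ[ℝ] E} {b : OrthonormalBasis ι ℝ E} {f : ι → ℝ}

lemma repr_apply_of_eigenbasis (hT : T.IsSymmetric) (hb : ∀ i, T (b i) = f i • b i) (x : E)
    (i : ι) : b.repr (T x) i = f i * b.repr x i := by
  rw [b.repr_apply_apply, b.repr_apply_apply, ← hT, hb, real_inner_smul_left]

lemma inner_apply_self_eq_sum (hT : T.IsSymmetric) (hb : ∀ i, T (b i) = f i • b i) (x : E) :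
    ⟪x, T x⟫ = ∑ i, f i * b.repr x i ^ 2 := by
  rw [← b.sum_inner_mul_inner]
  refine sum_congr rfl fun i _ => ?_
  rw [← b.repr_apply_apply, hT.repr_apply_of_eigenbasis hb, real_inner_comm, ← b.repr_apply_apply]
  ring

lemma norm_apply_sub_smul_sq (hT : T.IsSymmetric) (hb : ∀ i, T (b i) = f i • b i) (x : E)
    (μ : ℝ) : ‖T x - μ • x‖ ^ 2 = ∑ i, (f i - μ) ^ 2 * b.repr x i ^ 2 := by
  rw [← b.repr.norm_map, EuclideanSpace.real_norm_sq_eq]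
  refine sum_congr rfl fun i _ => ?_
  simp only [map_sub, map_smul, PiLp.sub_apply, PiLp.smul_apply, smul_eq_mul,
    hT.repr_apply_of_eigenbasis hb]
  ring

lemma mul_norm_sq_le_inner_apply_self (hT : T.IsSymmetric) (hb : ∀ i, T (b i) = f i • b i)
    {x : E} {μ : ℝ} (h : ∀ i, b.repr x i ≠ 0 → μ ≤ f i) : μ * ‖x‖ ^ 2 ≤ ⟪x, T x⟫ := by
  rw [hT.inner_apply_self_eq_sum hb, ← b.repr.norm_map, EuclideanSpace.real_norm_sq_eq, mul_sum]
  exact sum_mul_sq_le_sum_mul_sq _ h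

lemma inner_apply_self_le_mul_norm_sq (hT : T.IsSymmetric) (hb : ∀ i, T (b i) = f i • b i)
    {x : E} {μ : ℝ} (h : ∀ i, b.repr x i ≠ 0 → f i ≤ μ) : ⟪x, T x⟫ ≤ μ * ‖x‖ ^ 2 := by
  rw [hT.inner_apply_self_eq_sum hb, ← b.repr.norm_map, EuclideanSpace.real_norm_sq_eq, mul_sum]
  exact sum_mul_sq_le_sum_mul_sq _ h

lemma mul_norm_le_norm_apply_sub_smul (hT : T.IsSymmetric) (hb : ∀ i, T (b i) = f i • b i)
    {x : E} {μ δ : ℝ} (h : ∀ i, b.repr x i ≠ 0 → δ ≤ |f i - μ|) : δ * ‖x‖ ≤ ‖T x - μ • x‖ := by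
  rcases le_or_gt δ 0 with hδ | hδ
  · exact (mul_nonpos_of_nonpos_of_nonneg hδ (norm_nonneg x)).trans (norm_nonneg _)
  rw [← pow_le_pow_iff_left₀ (by positivity) (norm_nonneg _) two_ne_zero, mul_pow,
    hT.norm_apply_sub_smul_sq hb, ← b.repr.norm_map, EuclideanSpace.real_norm_sq_eq, mul_sum]
  refine sum_mul_sq_le_sum_mul_sq _ fun i hi => ?_
  rw [← sq_abs (f i - μ)]
  exact pow_le_pow_left₀ hδ.le (h i hi) 2

/-- **Weyl's inequality**, via the dimension count of the Courant–Fischer argument. -/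
theorem le_add_of_finrank_lt [FiniteDimensional ℝ E] {T' : E →ₗ[ℝ] E} (hT : T.IsSymmetric)
    (hT' : T'.IsSymmetric) {b' : OrthonormalBasis ι ℝ E} {f' : ι → ℝ}
    (hb : ∀ i, T (b i) = f i • b i) (hb' : ∀ i, T' (b' i) = f' i • b' i) {lam μ ε : ℝ}
    (hε : ∀ x, ⟪x, T' x⟫ ≤ ⟪x, T x⟫ + ε * ‖x‖ ^ 2)
    (hcard : finrank ℝ E < #{i | f i ≤ lam} + #{i | μ ≤ f' i}) : μ ≤ lam + ε := by
  set S := span ℝ (b '' ↑({i | f i ≤ lam} : Finset ι))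
  set S' := span ℝ (b' '' ↑({i | μ ≤ f' i} : Finset ι))
  have hS : ¬ Disjoint S S' := fun h => hcard.not_ge <| by
    simpa only [S, S', b.finrank_span_image, b'.finrank_span_image] using
      finrank_add_finrank_le_of_disjoint h
  obtain ⟨x, hxS, hxS', hx⟩ : ∃ x ∈ S, x ∈ S' ∧ x ≠ 0 := by
    simpa [disjoint_def] using hS
  have hlow : μ * ‖x‖ ^ 2 ≤ ⟪x, T' x⟫ := hT'.mul_norm_sq_le_inner_apply_self hb' fun i hi => by
    by_contra h
    exact hi (b'.repr_eq_zero_of_mem_span_image hxS' (by simpa using h))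
  have hup : ⟪x, T x⟫ ≤ lam * ‖x‖ ^ 2 := hT.inner_apply_self_le_mul_norm_sq hb fun i hi => by
    by_contra h
    exact hi (b.repr_eq_zero_of_mem_span_image hxS (by simpa using h))
  have hx2 : 0 < ‖x‖ ^ 2 := by positivity
  nlinarith [hε x]

lemma repr_eq_zero_of_inner_eq_zero (hT : T.IsSymmetric) (hb : ∀ i, T (b i) = f i • b i)
    {i₀ : ι} (hsimple : ∀ i ≠ i₀, f i ≠ f i₀) {u w : E} (hu : T u = f i₀ • u) (hu₀ : u ≠ 0)
    (huw : ⟪u, w⟫ = 0) : b.repr w i₀ = 0 := by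
  have hsupp : ∀ i ≠ i₀, b.repr u i = 0 := fun i hi => by
    have h := hT.repr_apply_of_eigenbasis hb u i
    rw [hu, map_smul, PiLp.smul_apply, smul_eq_mul] at h
    exact (mul_eq_zero.mp (by linear_combination -h : (f i - f i₀) * b.repr u i = 0)).resolve_left
      (sub_ne_zero.mpr (hsimple i hi))
  have hu₀' : b.repr u i₀ ≠ 0 := fun h => hu₀ <| b.repr.map_eq_zero_iff.mp <| by
    ext i
    rcases eq_or_ne i i₀ with rfl | hi
    · simpa using h
    · simpa using hsupp i hi
  rw [← b.sum_inner_mul_inner, sum_eq_single i₀ (fun i _ hi => by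
    rw [real_inner_comm, ← b.repr_apply_apply, hsupp i hi, zero_mul]) (by simp),
    real_inner_comm, ← b.repr_apply_apply, ← b.repr_apply_apply] at huw
  exact (mul_eq_zero.mp huw).resolve_left hu₀'

lemma sub_mul_norm_le_norm_apply_sub_smul (hT : T.IsSymmetric) (hb : ∀ i, T (b i) = f i • b i)
    {i₀ : ι} {g ε μ : ℝ} (hg : 0 < g) (hgap : ∀ i ≠ i₀, g ≤ |f i - f i₀|) (hμ : |μ - f i₀| ≤ ε)
    {u w : E} (hu : T u = f i₀ • u) (hu₀ : u ≠ 0) (huw : ⟪u, w⟫ = 0) :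
    (g - ε) * ‖w‖ ≤ ‖T w - μ • w‖ := by
  have hw : b.repr w i₀ = 0 := hT.repr_eq_zero_of_inner_eq_zero hb
    (fun i hi h => by simpa [h] using hg.trans_le (hgap i hi)) hu hu₀ huw
  refine hT.mul_norm_le_norm_apply_sub_smul hb fun i hi => ?_
  have hi₀ : i ≠ i₀ := by rintro rfl; exact hi hw
  calc g - ε ≤ |f i - f i₀| - |μ - f i₀| := by linarith [hgap i hi₀]
    _ ≤ |f i - μ| := by linarith [abs_sub_le (f i) μ (f i₀)]

lemma norm_apply_sub_smul_sub_inner_smul_le (hT : T.IsSymmetric) {u v : E} (hu : ‖u‖ = 1)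
    {lam : ℝ} (hTu : T u = lam • u) (μ : ℝ) :
    ‖T (v - ⟪u, v⟫ • u) - μ • (v - ⟪u, v⟫ • u)‖ ≤ ‖T v - μ • v‖ := by
  set y := T (v - ⟪u, v⟫ • u) - μ • (v - ⟪u, v⟫ • u)
  -- `y` is the component of the residual `T v - μ • v` orthogonal to `u`
  have hy : T v - μ • v = y + (⟪u, v⟫ * (lam - μ)) • u := by
    simp only [y, map_sub, map_smul, hTu]
    module
  have huy : ⟪u, y⟫ = 0 := by
    simp only [y, inner_sub_right, ← hT u, hTu, real_inner_smul_left, real_inner_smul_right,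
      real_inner_self_eq_norm_sq, hu]
    ring
  rw [hy, mul_self_le_mul_self_iff (norm_nonneg _) (norm_nonneg _),
    norm_add_sq_eq_norm_sq_add_norm_sq_real (by rw [real_inner_smul_right, real_inner_comm u y, huy,
      mul_zero])]
  exact le_add_of_nonneg_right (mul_self_nonneg _)

end LinearMap.IsSymmetric

section UnitVectors

variable {E : Type*} [NormedAddCommGroup E] [InnerProductSpace ℝ E] {u v : E}

lemma norm_sub_inner_smul_sq (hu : ‖u‖ = 1) : ‖v - ⟪u, v⟫ • u‖ ^ 2 = ‖v‖ ^ 2 - ⟪u, v⟫ ^ 2 := by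
  rw [norm_sub_sq_real, real_inner_smul_right, norm_smul, real_inner_comm, hu, Real.norm_eq_abs,
    mul_pow, sq_abs]
  ring

lemma norm_sub_sq_le_of_inner_nonneg (hu : ‖u‖ = 1) (hv : ‖v‖ = 1) (huv : 0 ≤ ⟪u, v⟫) :
    ‖v - u‖ ^ 2 ≤ ‖v - ⟪u, v⟫ • u‖ ^ 2 + ‖v - ⟪u, v⟫ • u‖ ^ 4 := by
  have hc : ⟪u, v⟫ ≤ 1 := (real_inner_le_norm u v).trans (by rw [hu, hv, one_mul])
  rw [show ‖v - ⟪u, v⟫ • u‖ ^ 4 = (‖v - ⟪u, v⟫ • u‖ ^ 2) ^ 2 by ring, norm_sub_inner_smul_sq hu,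
    norm_sub_sq_real, hu, hv, real_inner_comm]
  -- the difference of the two sides is `(1 - c)² c (c + 2)` with `c = ⟪u, v⟫`
  nlinarith [mul_nonneg (mul_nonneg (sq_nonneg (1 - ⟪u, v⟫)) huv) (by linarith : 0 ≤ ⟪u, v⟫ + 2)]

end UnitVectors

lemma le_div_add_six_mul_sq_div_sq {g ε t d : ℝ} (hg : 0 < g) (hε : 0 ≤ ε) (ht : 0 ≤ t)
    (hgt : (g - ε) * t ≤ ε) (hd : 0 ≤ d) (hd2 : d ≤ 2) (hdt : d ^ 2 ≤ t ^ 2 + t ^ 4) :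
    d ≤ ε / g + 6 * ε ^ 2 / g ^ 2 := by
  set x := ε / g with hx
  have hx₀ : 0 ≤ x := div_nonneg hε hg.le
  have hxt : (1 - x) * t ≤ x := by
    rwa [hx, one_sub_div hg.ne', div_mul_eq_mul_div, div_le_div_iff_of_pos_right hg]
  rw [show ε / g + 6 * ε ^ 2 / g ^ 2 = x + 6 * x ^ 2 by ring]
  rcases le_or_gt (1 / 2) x with hx2 | hx2
  · nlinarith
  have ht2 : t ≤ 2 * x := by nlinarith
  have hdt' : d ≤ t + t ^ 3 / 2 := by
    rw [← pow_le_pow_iff_left₀ hd (by positivity) two_ne_zero]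
    nlinarith [pow_nonneg ht 6]
  have ht3 : t ^ 3 ≤ 4 * x ^ 2 := by
    calc t ^ 3 ≤ (2 * x) ^ 3 := pow_le_pow_left₀ ht ht2 3
      _ ≤ 4 * x ^ 2 := by nlinarith [pow_nonneg hx₀ 2]
  nlinarith

namespace Matrix.IsHermitian

lemma toEuclideanLin_eigenvectorBasis {n : Type*} [Fintype n] [DecidableEq n]
    {A : Matrix n n ℝ} (hA : A.IsHermitian) (i : n) :
    toEuclideanLin A (hA.eigenvectorBasis i) = hA.eigenvalues i • hA.eigenvectorBasis i := by
  ext j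
  simpa [toLpLin_apply] using congr_fun (hA.mulVec_eigenvectorBasis i) j

variable {p : ℕ} {A A' B : Matrix (Fin p) (Fin p) ℝ}

lemma sortedEig_le_add (hA : A.IsHermitian) (hA' : A'.IsHermitian) {ε : ℝ}
    (hε : ∀ x, ⟪x, toEuclideanLin A' x⟫ ≤ ⟪x, toEuclideanLin A x⟫ + ε * ‖x‖ ^ 2) (r : Fin p) :
    sortedEig hA' r ≤ sortedEig hA r + ε := by
  refine (isSymmetric_toEuclideanLin_iff.mpr hA).le_add_of_finrank_lt
    (isSymmetric_toEuclideanLin_iff.mpr hA') hA.toEuclideanLin_eigenvectorBasis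
    hA'.toEuclideanLin_eigenvectorBasis hε ?_
  have h := Tuple.succ_le_card_filter_le_apply_sort hA.eigenvalues r.rev
  have h' := Tuple.sub_le_card_filter_apply_sort_le hA'.eigenvalues r.rev
  rw [Fin.val_rev] at h h'
  rw [finrank_euclideanSpace_fin]
  unfold sortedEig
  omega

lemma abs_sortedEig_add_sub_le (hA : A.IsHermitian) (hAB : (A + B).IsHermitian) (r : Fin p) :
    |sortedEig hAB r - sortedEig hA r| ≤ ‖toEuclideanCLM (𝕜 := ℝ) B‖ := by
  have hB : ∀ x, |⟪x, toEuclideanLin B x⟫| ≤ ‖toEuclideanCLM (𝕜 := ℝ) B‖ * ‖x‖ ^ 2 := fun x =>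
    calc |⟪x, toEuclideanLin B x⟫| ≤ ‖x‖ * ‖toEuclideanCLM (𝕜 := ℝ) B x‖ :=
          abs_real_inner_le_norm _ _
      _ ≤ ‖x‖ * (‖toEuclideanCLM (𝕜 := ℝ) B‖ * ‖x‖) := by
          gcongr
          exact ContinuousLinearMap.le_opNorm _ _
      _ = ‖toEuclideanCLM (𝕜 := ℝ) B‖ * ‖x‖ ^ 2 := by ring
  rw [abs_sub_le_iff]
  constructor
  · refine sub_left_le_of_le_add (sortedEig_le_add hA hAB (fun x => ?_) r)
    simp only [map_add, LinearMap.add_apply, inner_add_right]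
    linarith [le_abs_self ⟪x, toEuclideanLin B x⟫, hB x]
  · refine sub_left_le_of_le_add (sortedEig_le_add hAB hA (fun x => ?_) r)
    simp only [map_add, LinearMap.add_apply, inner_add_right]
    linarith [neg_abs_le ⟪x, toEuclideanLin B x⟫, hB x]

lemma le_abs_eigenvalues_sub_of_sortedEig (hA : A.IsHermitian) {r : Fin p} {g : ℝ}
    (hgap : ∀ j, j ≠ r → g ≤ |sortedEig hA j - sortedEig hA r|) (i : Fin p)
    (hi : i ≠ Tuple.sort hA.eigenvalues r.rev) :
    g ≤ |hA.eigenvalues i - hA.eigenvalues (Tuple.sort hA.eigenvalues r.rev)| := by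
  have hj : ((Tuple.sort hA.eigenvalues).symm i).rev ≠ r := by
    rintro rfl
    simp at hi
  simpa [sortedEig] using hgap _ hj

end Matrix.IsHermitian

theorem eigenvector_perturbation_general {p : ℕ} (A B : Matrix (Fin p) (Fin p) ℝ)
    (hA : A.IsHermitian) (hAB : (A + B).IsHermitian)
    (r : Fin p) (g : ℝ) (hg : 0 < g)
    (hgap : ∀ j, j ≠ r → g ≤ |sortedEig hA j - sortedEig hA r|)
    (u v : Fin p → ℝ)
    (hu : A.mulVec u = sortedEig hA r • u) (hunorm : ∑ j, u j ^ 2 = 1)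
    (hv : (A + B).mulVec v = sortedEig hAB r • v) (hvnorm : ∑ j, v j ^ 2 = 1)
    (hsign : 0 ≤ ∑ j, u j * v j) :
    Real.sqrt (∑ j, (v j - u j) ^ 2)
      ≤ ‖Matrix.toEuclideanCLM (𝕜 := ℝ) B‖ / g
        + 6 * ‖Matrix.toEuclideanCLM (𝕜 := ℝ) B‖ ^ 2 / g ^ 2 := by
  set ε := ‖toEuclideanCLM (𝕜 := ℝ) B‖
  set T := toEuclideanLin A
  have hT : T.IsSymmetric := isSymmetric_toEuclideanLin_iff.mpr hA
  set u' := WithLp.toLp 2 u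
  set v' := WithLp.toLp 2 v
  have hu1 : ‖u'‖ = 1 := by simp [u', EuclideanSpace.norm_eq, hunorm]
  have hv1 : ‖v'‖ = 1 := by simp [v', EuclideanSpace.norm_eq, hvnorm]
  have huv : 0 ≤ ⟪u', v'⟫ := by
    simpa [u', v', EuclideanSpace.inner_toLp_toLp, dotProduct, mul_comm] using hsign
  have hTu : T u' = sortedEig hA r • u' := by simp [T, u', toLpLin_toLp, hu]
  have hTv : T v' + toEuclideanCLM (𝕜 := ℝ) B v' = sortedEig hAB r • v' := by
    simpa [T, v', toLpLin_toLp, add_mulVec] using congrArg (WithLp.toLp 2) hv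
  rw [show √(∑ j, (v j - u j) ^ 2) = ‖v' - u'‖ by
    simp [← dist_eq_norm, EuclideanSpace.dist_eq, Real.dist_eq, sq_abs, u', v']]
  set w := v' - ⟪u', v'⟫ • u'
  have hlow : (g - ε) * ‖w‖ ≤ ‖T w - sortedEig hAB r • w‖ :=
    hT.sub_mul_norm_le_norm_apply_sub_smul hA.toEuclideanLin_eigenvectorBasis hg
      (hA.le_abs_eigenvalues_sub_of_sortedEig hgap) (hA.abs_sortedEig_add_sub_le hAB r) hTu
      (norm_ne_zero_iff.mp (hu1 ▸ one_ne_zero))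
      (by simp [w, inner_sub_right, real_inner_smul_right, hu1])
  have hup : ‖T w - sortedEig hAB r • w‖ ≤ ε := by
    refine (hT.norm_apply_sub_smul_sub_inner_smul_le hu1 hTu _).trans ?_
    rw [← hTv, sub_add_cancel_left, norm_neg]
    simpa [hv1] using (toEuclideanCLM (𝕜 := ℝ) B).le_opNorm v'
  exact le_div_add_six_mul_sq_div_sq hg (norm_nonneg _) (norm_nonneg w) (hlow.trans hup)
    (norm_nonneg _) ((norm_sub_le _ _).trans (by rw [hu1, hv1]; norm_num))
    (norm_sub_sq_le_of_inner_nonneg hu1 hv1 huv)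

/-- Eigenvector perturbation bound (Lemma A.1 of Kneip–Utikal): if `g > 0` lower-bounds the
eigengap of `A` at `r`, and `u`, `v` are unit eigenvectors of `A` and `A+B` for their `r`-th
largest eigenvalues with `uᵀv ≥ 0`, then `‖v − u‖₂ ≤ ‖B‖/g + 6‖B‖²/g²`. -/
theorem eigenvector_perturbation {p : ℕ} (A B : Matrix (Fin p) (Fin p) ℝ)
    (hA : A.IsHermitian) (hB : B.IsHermitian) (hAB : (A + B).IsHermitian)
    (r : Fin p) (g : ℝ) (hg : 0 < g)
    (hgap : ∀ j, j ≠ r → g ≤ |sortedEig hA j - sortedEig hA r|)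
    (u v : Fin p → ℝ)
    (hu : A.mulVec u = sortedEig hA r • u) (hunorm : ∑ j, u j ^ 2 = 1)
    (hv : (A + B).mulVec v = sortedEig hAB r • v) (hvnorm : ∑ j, v j ^ 2 = 1)
    (hsign : 0 ≤ ∑ j, u j * v j) :
    Real.sqrt (∑ j, (v j - u j) ^ 2)
      ≤ ‖Matrix.toEuclideanCLM (𝕜 := ℝ) B‖ / g
        + 6 * ‖Matrix.toEuclideanCLM (𝕜 := ℝ) B‖ ^ 2 / g ^ 2 :=
  eigenvector_perturbation_general A B hA hAB r g hg hgap u v hu hunorm hv hvnorm hsign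
end
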